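/- Let A, B, E, L, H, R, G be real matrices of compatible dimensions with R, G symmetric positive definite, and let q_{μν} (ν = 1,...,M) be reals with q_{μν} ≥ 0 for ν ≠ μ. Let Y(ν) ∈ ℝ^{n×n} be symmetric positive definite for each ν and set X(ν) = Y(ν)⁻¹. If the block LMI [[G₁₁, G₁₂, G₁₃],[G₁₂ᵀ, G₂₂, 0],[G₁₃ᵀ, 0, G₃₃]] < 0 holds (with blocks defined as in Theorem 3, evaluated at mode μ, with positive scalars τ̃ᵘ, τ̃, θ̃ⱼ, β̄), then with τᵘ = (τ̃ᵘ)⁻¹, τ = τ̃⁻¹, θⱼ = θ̃ⱼ⁻¹, βᵘ = β̄⁻¹ τ̃ᵘ, the Riccati-type matrix inequality AᵀX(μ) + X(μ)A + Σ_ν q_{μν} X(ν) + R + X(μ)(B̄₂B̄₂ᵀ - B G⁻¹ Bᵀ)X(μ) + τᵘ βᵘ I + (τ + θ̄) HᵀH < 0 holds, where B̄₂ = [(τᵘ)^{-1/2}B, τ^{-1/2}E, θ^{-1/2}L] and θ̄ = Σ_{j≠i} θⱼ. -/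

import Mathlib

/-!
Since `Y(μ)` is invertible, the Riccati inequality (10) is the congruence by `Y(μ) = X(μ)⁻¹` of
the Schur complement of the negative definite block `diag(G₂₂, G₃₃)` in the LMI (12). Both
`G₂₂` and `G₃₃` are block diagonal, so `diag(G₂₂, G₃₃)⁻¹ [G₁₂ G₁₃]ᵀ` can be written down block by
block; the Schur complement step is then carried out with this explicit factor in place of an
inverse.
-/

open Matrix

namespace Matrix

variable {ι m n p R : Type*}

theorem PosDef.sub_mul_of_fromBlocks [Fintype m] [Fintype n] [CommRing R] [PartialOrder R]
    [StarRing R] {A : Matrix m m R} {B : Matrix m n R} {D : Matrix n n R} {K : Matrix n m R}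
    (h : (fromBlocks A B Bᴴ D).PosDef) (hK : D * K = Bᴴ) : (A - B * K).PosDef := by
  rw [posDef_iff_dotProduct_mulVec] at h
  obtain ⟨hA, -, -, hD⟩ := isHermitian_fromBlocks_iff.mp h.1
  have hBK : B * K = Kᴴ * D * K := by
    rw [← conjTranspose_conjTranspose B, ← hK, conjTranspose_mul, hD.eq, Matrix.mul_assoc]
  refine .of_dotProduct_mulVec_pos ?_ fun x hx => ?_
  · rw [hBK]
    exact hA.sub (isHermitian_conjTranspose_mul_mul K hD)
  · -- the test vector `(x, -K x)` is annihilated by the second block row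
    have hw : x ⊕ᵥ -(K *ᵥ x) ≠ 0 := fun h0 => hx (by simpa using congrArg (· ∘ Sum.inl) h0)
    have key := h.2 hw
    rw [fromBlocks_mulVec] at key
    simp only [Sum.elim_comp_inl, Sum.elim_comp_inr] at key
    rwa [mulVec_neg, mulVec_neg, mulVec_mulVec, mulVec_mulVec, hK, add_neg_cancel,
      ← sub_eq_add_neg, ← sub_mulVec, Function.star_sumElim, sumElim_dotProduct_sumElim,
      dotProduct_zero, add_zero] at key

theorem PosDef.neg_sub_mul_of_neg_fromBlocks [Fintype m] [Fintype n] [CommRing R]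
    [PartialOrder R] [StarRing R] {A : Matrix m m R} {B : Matrix m n R} {D : Matrix n n R}
    {K : Matrix n m R} (h : (-fromBlocks A B Bᴴ D).PosDef) (hK : D * K = Bᴴ) :
    (-(A - B * K)).PosDef := by
  rw [fromBlocks_neg, ← conjTranspose_neg] at h
  rw [neg_sub', ← Matrix.neg_mul]
  exact h.sub_mul_of_fromBlocks (by rw [Matrix.neg_mul, hK, conjTranspose_neg])

def fromColBlocks (P : ι → Matrix m n R) : Matrix m (ι × n) R := of fun a b => P b.1 a b.2

def fromRowBlocks (Q : ι → Matrix n p R) : Matrix (ι × n) p R := of fun a b => Q a.1 a.2 b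

/-- `blockDiagonal` with the block index in the first component of `ι × n`. -/
def blockDiagonalFst [DecidableEq ι] [Zero R] (D : ι → Matrix n n R) :
    Matrix (ι × n) (ι × n) R :=
  of fun a b => if a.1 = b.1 then D a.1 a.2 b.2 else 0

theorem transpose_fromColBlocks (P : ι → Matrix m n R) :
    (fromColBlocks P)ᵀ = fromRowBlocks fun i => (P i)ᵀ := rfl

theorem fromColBlocks_mul_fromRowBlocks [Fintype ι] [Fintype n] [NonUnitalNonAssocSemiring R]
    (P : ι → Matrix m n R) (Q : ι → Matrix n p R) :
    fromColBlocks P * fromRowBlocks Q = ∑ i, P i * Q i := by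
  ext a b
  simp [fromColBlocks, fromRowBlocks, mul_apply, Matrix.sum_apply, Fintype.sum_prod_type]

theorem blockDiagonalFst_mul_fromRowBlocks [Fintype ι] [DecidableEq ι] [Fintype n]
    [NonUnitalNonAssocSemiring R] (D : ι → Matrix n n R) (Q : ι → Matrix n p R) :
    blockDiagonalFst D * fromRowBlocks Q = fromRowBlocks fun i => D i * Q i := by
  ext a b
  simp [blockDiagonalFst, fromRowBlocks, mul_apply, Fintype.sum_prod_type]

theorem diagonal_mul_fromRowBlocks [Fintype ι] [Fintype n] [NonUnitalNonAssocSemiring R]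
    [DecidableEq ι] [DecidableEq n] (d : ι → R) (Q : ι → Matrix n p R) :
    diagonal (fun a : ι × n => d a.1) * fromRowBlocks Q = fromRowBlocks fun i => d i • Q i := by
  ext a b
  simp [fromRowBlocks]

theorem sqrt_smul_mul_transpose [Fintype n] {c : ℝ} (hc : 0 ≤ c) (B : Matrix m n ℝ) :
    (√c • B) * (√c • B)ᵀ = c • (B * Bᵀ) := by
  rw [transpose_smul, Matrix.smul_mul, Matrix.mul_smul, smul_smul, Real.mul_self_sqrt hc]

end Matrix

section LMIBlocks

variable {ι n k : Type*} [Fintype ι] [Fintype n]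

/-- `G₂₂⁻¹ G₁₂ᵀ` for the mode-coupling blocks `G₁₂`, `G₂₂` of the LMI. -/
noncomputable def couplingFactor (X : ι → Matrix n n ℝ) (c : ι → ℝ) (Z : Matrix n n ℝ) :
    Matrix (ι × n) n ℝ :=
  fromRowBlocks fun ν => -(√(c ν) • (X ν * Z))

theorem blockDiagonalFst_neg_mul_couplingFactor [DecidableEq ι] [DecidableEq n]
    {Y X : ι → Matrix n n ℝ} (hYX : ∀ ν, Y ν * X ν = 1) (c : ι → ℝ) {Z : Matrix n n ℝ}
    (hZ : Zᵀ = Z) :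
    blockDiagonalFst (fun ν => -Y ν) * couplingFactor X c Z =
      (fromColBlocks fun ν => √(c ν) • Z)ᵀ := by
  rw [couplingFactor, blockDiagonalFst_mul_fromRowBlocks, transpose_fromColBlocks]
  refine congrArg fromRowBlocks (funext fun ν => ?_)
  rw [neg_mul_neg, mul_smul_comm, ← Matrix.mul_assoc, hYX, Matrix.one_mul, transpose_smul, hZ]

theorem fromColBlocks_mul_couplingFactor (X : ι → Matrix n n ℝ) {c : ι → ℝ}
    (hc : ∀ ν, 0 ≤ c ν) (Z : Matrix n n ℝ) :
    fromColBlocks (fun ν => √(c ν) • Z) * couplingFactor X c Z =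
      -(Z * (∑ ν, c ν • X ν) * Z) := by
  rw [couplingFactor, fromColBlocks_mul_fromRowBlocks, Matrix.mul_sum, Finset.sum_mul,
    ← Finset.sum_neg_distrib]
  refine Finset.sum_congr rfl fun ν _ => ?_
  rw [Matrix.mul_neg, Matrix.smul_mul, Matrix.mul_smul, smul_smul, Real.mul_self_sqrt (hc ν),
    Matrix.mul_smul, Matrix.smul_mul, Matrix.mul_assoc]

/-- `G₃₃⁻¹ G₁₃ᵀ` for the blocks `G₁₃`, `G₃₃` of the LMI. -/
noncomputable def uncertaintyFactor (R Y : Matrix n n ℝ) (H : Matrix k n ℝ) (β τ : ℝ)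
    (θ : ι → ℝ) : Matrix (n ⊕ n ⊕ k ⊕ ι × k) n ℝ :=
  fromRows (-(R * Y)) (fromRows (-(β⁻¹ • Y)) (fromRows (-(τ⁻¹ • (H * Y)))
    (fromRowBlocks fun j => -((θ j)⁻¹ • (H * Y)))))

theorem fromBlocks_neg_inv_mul_uncertaintyFactor [DecidableEq ι] [DecidableEq n] [Fintype k]
    [DecidableEq k] {Y R : Matrix n n ℝ} (hY : Yᵀ = Y) (hR : IsUnit R) (H : Matrix k n ℝ)
    {β τ : ℝ} {θ : ι → ℝ} (hβ : β ≠ 0) (hτ : τ ≠ 0) (hθ : ∀ j, θ j ≠ 0) :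
    fromBlocks (-R⁻¹) 0 0 (fromBlocks (-(β • (1 : Matrix n n ℝ))) 0 0
        (fromBlocks (-(τ • (1 : Matrix k k ℝ))) 0 0 (diagonal fun a : ι × k => -θ a.1))) *
      uncertaintyFactor R Y H β τ θ =
      (fromCols Y (fromCols Y (fromCols (Y * Hᵀ) (fromColBlocks fun _ : ι => Y * Hᵀ))))ᵀ := by
  rw [uncertaintyFactor, fromBlocks_mul_fromRows, fromBlocks_mul_fromRows,
    fromBlocks_mul_fromRows, diagonal_mul_fromRowBlocks (fun j => -θ j)]
  simp [transpose_fromCols, transpose_fromColBlocks, hY, ← Matrix.mul_assoc,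
    nonsing_inv_mul _ ((isUnit_iff_isUnit_det R).mp hR), smul_smul, hβ, hτ, hθ]

theorem fromCols_mul_uncertaintyFactor [DecidableEq n] [Fintype k] (Y R : Matrix n n ℝ)
    (H : Matrix k n ℝ) (β τ : ℝ) (θ : ι → ℝ) :
    fromCols Y (fromCols Y (fromCols (Y * Hᵀ) (fromColBlocks fun _ : ι => Y * Hᵀ))) *
      uncertaintyFactor R Y H β τ θ =
      -(Y * (R + β⁻¹ • 1 + (τ⁻¹ + ∑ j, (θ j)⁻¹) • (Hᵀ * H)) * Y) := by
  simp only [uncertaintyFactor, fromCols_mul_fromRows, fromColBlocks_mul_fromRowBlocks,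
    Matrix.mul_neg, Matrix.mul_add, Matrix.add_mul, add_smul, Finset.sum_smul, Matrix.mul_sum,
    Finset.sum_mul, Matrix.mul_smul, Matrix.smul_mul, Matrix.mul_assoc, Matrix.mul_one, neg_add,
    Finset.sum_neg_distrib]
  abel

end LMIBlocks

theorem lmi_implies_riccati_general
    (n m g s h N M : ℕ) (i : Fin N) (μ : Fin M)
    (A : Matrix (Fin n) (Fin n) ℝ) (B : Matrix (Fin n) (Fin m) ℝ)
    (E : Matrix (Fin n) (Fin g) ℝ) (L : Matrix (Fin n) (Fin s) ℝ)
    (H : Matrix (Fin h) (Fin n) ℝ)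
    (R : Matrix (Fin n) (Fin n) ℝ) (hR : R.PosDef)
    (Gw : Matrix (Fin m) (Fin m) ℝ)
    (q : Fin M → ℝ) (hq : ∀ ν : Fin M, ν ≠ μ → 0 ≤ q ν)
    (Y : Fin M → Matrix (Fin n) (Fin n) ℝ) (hY : ∀ ν, (Y ν).PosDef)
    (hYsymm : ∀ ν, (Y ν).IsSymm)
    (X : Fin M → Matrix (Fin n) (Fin n) ℝ) (hX : ∀ ν, X ν = (Y ν)⁻¹)
    (τut τt βb : ℝ) (θt : Fin N → ℝ)
    (hτut : 0 < τut) (hτt : 0 < τt) (hβb : 0 < βb) (hθt : ∀ j, 0 < θt j)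
    -- the blocks of the LMI (12)
    (G11 : Matrix (Fin n) (Fin n) ℝ)
    (hG11 : G11 = Y μ * Aᵀ + A * Y μ + q μ • Y μ - B * Gw⁻¹ * Bᵀ
      + τut • (B * Bᵀ) + τt • (E * Eᵀ) + θt i • (L * Lᵀ))
    (G12 : Matrix (Fin n) ({ν : Fin M // ν ≠ μ} × Fin n) ℝ)
    (hG12 : G12 = Matrix.of fun a b => Real.sqrt (q b.1.1) * Y μ a b.2)
    (G22 : Matrix ({ν : Fin M // ν ≠ μ} × Fin n) ({ν : Fin M // ν ≠ μ} × Fin n) ℝ)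
    (hG22 : G22 = Matrix.of fun a b => if a.1 = b.1 then -Y a.1.1 a.2 b.2 else 0)
    (G13 : Matrix (Fin n) (Fin n ⊕ Fin n ⊕ Fin h ⊕ ({j : Fin N // j ≠ i} × Fin h)) ℝ)
    (hG13 : G13 = Matrix.of fun a b =>
      Sum.elim (fun k => Y μ a k)
        (Sum.elim (fun k => Y μ a k)
          (Sum.elim (fun k => (Y μ * Hᵀ) a k) (fun jk => (Y μ * Hᵀ) a jk.2))) b)
    (G33 : Matrix (Fin n ⊕ Fin n ⊕ Fin h ⊕ ({j : Fin N // j ≠ i} × Fin h))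
      (Fin n ⊕ Fin n ⊕ Fin h ⊕ ({j : Fin N // j ≠ i} × Fin h)) ℝ)
    (hG33 : G33 = Matrix.fromBlocks (-(R⁻¹)) 0 0
      (Matrix.fromBlocks (-(βb • (1 : Matrix (Fin n) (Fin n) ℝ))) 0 0
        (Matrix.fromBlocks (-(τt • (1 : Matrix (Fin h) (Fin h) ℝ))) 0 0
          (Matrix.of fun a b => if a = b then -θt a.1.1 else 0))))
    -- the LMI (12): the full block matrix is negative definite
    (hLMI : (-(Matrix.fromBlocks G11
        (Matrix.of fun a b => Sum.elim (G12 a) (G13 a) b)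
        (Matrix.of fun a b => Sum.elim (fun c => G12 b c) (fun c => G13 b c) a)
        (Matrix.fromBlocks G22 0 0 G33))).PosDef)
    -- the transformed scalars
    (τu τ βu : ℝ) (θ : Fin N → ℝ)
    (hτu : τu = τut⁻¹) (hτ : τ = τt⁻¹) (hθ : ∀ j, θ j = (θt j)⁻¹)
    (hβu : βu = βb⁻¹ * τut)
    (B2 : Matrix (Fin n) (Fin m ⊕ Fin g ⊕ Fin s) ℝ)
    (hB2 : B2 = Matrix.of fun a b =>
      Sum.elim (fun k => Real.sqrt τu⁻¹ * B a k)
        (Sum.elim (fun k => Real.sqrt τ⁻¹ * E a k)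
          (fun k => Real.sqrt (θ i)⁻¹ * L a k)) b)
    (θbar : ℝ) (hθbar : θbar = ∑ j ∈ Finset.univ.erase i, θ j) :
    -- the Riccati-type matrix inequality (10)
    (-(Aᵀ * X μ + X μ * A + ∑ ν : Fin M, q ν • X ν + R
        + X μ * (B2 * B2ᵀ - B * Gw⁻¹ * Bᵀ) * X μ
        + (τu * βu) • (1 : Matrix (Fin n) (Fin n) ℝ)
        + (τ + θbar) • (Hᵀ * H))).PosDef := by
  have hXY : ∀ ν, X ν * Y ν = 1 := fun ν => by
    rw [hX]; exact nonsing_inv_mul _ ((isUnit_iff_isUnit_det _).mp (hY ν).isUnit)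
  have hYX : ∀ ν, Y ν * X ν = 1 := fun ν => by
    rw [hX]; exact mul_nonsing_inv _ ((isUnit_iff_isUnit_det _).mp (hY ν).isUnit)
  set K2 := couplingFactor (fun ν : {ν // ν ≠ μ} => X ν) (fun ν => q ν) (Y μ)
  set K3 := uncertaintyFactor R (Y μ) H βb τt fun j : {j // j ≠ i} => θt j
  have hG12 : G12 = fromColBlocks fun ν : {ν // ν ≠ μ} => √(q ν) • Y μ := hG12
  have hG13 : G13 = fromCols (Y μ) (fromCols (Y μ) (fromCols (Y μ * Hᵀ)
      (fromColBlocks fun _ : {j // j ≠ i} => Y μ * Hᵀ))) := hG13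
  have hG22 : G22 = blockDiagonalFst fun ν : {ν // ν ≠ μ} => -Y ν := hG22
  have hG33 : G33 = fromBlocks (-(R⁻¹)) 0 0 (fromBlocks (-(βb • 1)) 0 0
      (fromBlocks (-(τt • 1)) 0 0 (diagonal fun jk : {j // j ≠ i} × Fin h => -θt jk.1))) := hG33
  have hK : fromBlocks G22 0 0 G33 * fromRows K2 K3 = (fromCols G12 G13)ᴴ := by
    rw [fromBlocks_mul_fromRows, Matrix.zero_mul, Matrix.zero_mul, add_zero, zero_add, hG22, hG33,
      conjTranspose_eq_transpose_of_trivial, transpose_fromCols, hG12, hG13,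
      blockDiagonalFst_neg_mul_couplingFactor (fun ν : {ν // ν ≠ μ} => hYX ν) _ (hYsymm μ),
      fromBlocks_neg_inv_mul_uncertaintyFactor (hYsymm μ) hR.isUnit H hβb.ne' hτt.ne'
        fun j : {j // j ≠ i} => (hθt j).ne']
  have hSchur := PosDef.neg_sub_mul_of_neg_fromBlocks hLMI hK
  have hB2B2 : B2 * B2ᵀ = τut • (B * Bᵀ) + τt • (E * Eᵀ) + θt i • (L * Lᵀ) := by
    have hB2' : B2 = fromCols (√τut • B) (fromCols (√τt • E) (√(θt i) • L)) := by
      rw [hB2, hτu, hτ, hθ, inv_inv, inv_inv, inv_inv]; rfl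
    rw [hB2', transpose_fromCols, transpose_fromCols, fromCols_mul_fromRows, fromCols_mul_fromRows,
      sqrt_smul_mul_transpose hτut.le, sqrt_smul_mul_transpose hτt.le,
      sqrt_smul_mul_transpose (hθt i).le, add_assoc]
  have hβ : τu * βu = βb⁻¹ := by
    rw [hτu, hβu]; field_simp
  have hθbar : τ + θbar = τt⁻¹ + ∑ j : {j // j ≠ i}, (θt j)⁻¹ := by
    rw [hτ, hθbar, Finset.sum_subtype _ (F := inferInstance) (p := (· ≠ i)) (fun j => by simp)]
    simp only [hθ]
  have hS : G11 - fromCols G12 G13 * fromRows K2 K3 = Y μ * (Aᵀ * X μ + X μ * A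
      + ∑ ν : Fin M, q ν • X ν + R + X μ * (B2 * B2ᵀ - B * Gw⁻¹ * Bᵀ) * X μ
      + (τu * βu) • 1 + (τ + θbar) • (Hᵀ * H)) * Y μ := by
    rw [fromCols_mul_fromRows, hG12, hG13,
      fromColBlocks_mul_couplingFactor _ (fun ν : {ν // ν ≠ μ} => hq ν ν.2),
      fromCols_mul_uncertaintyFactor, hG11, hB2B2, Fintype.sum_eq_add_sum_subtype_ne _ μ, hβ, hθbar]
    simp only [Matrix.mul_add, Matrix.add_mul, Matrix.mul_sub, Matrix.sub_mul, Matrix.mul_smul,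
      Matrix.smul_mul, Matrix.mul_assoc, hXY, Matrix.mul_one, Matrix.one_mul,
      ← Matrix.mul_assoc (Y μ) (X μ), hYX]
    abel
  rw [← (hY μ).isUnit.posDef_star_left_conjugate_iff, star_eq_conjTranspose,
    conjTranspose_eq_transpose_of_trivial, hYsymm μ, Matrix.mul_neg, Matrix.neg_mul, ← hS]
  exact hSchur

/-- equivalence (one direction), via congruence by `Y(μ) = X(μ)⁻¹` and Schur
complements, between the block LMI (12) of Theorem 3 (blocks `G₁₁, G₁₂, G₁₃, G₂₂, G₃₃`
evaluated at mode `μ`, with positive scalars `τ̃ᵘ, τ̃, θ̃ⱼ, β̄`) and the coupled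
Riccati-type inequality (10) of Theorem 1, with `τᵘ = (τ̃ᵘ)⁻¹`, `τ = τ̃⁻¹`,
`θⱼ = θ̃ⱼ⁻¹`, `βᵘ = β̄⁻¹ τ̃ᵘ`, `B̄₂ = [(τᵘ)^{-1/2} B, τ^{-1/2} E, θᵢ^{-1/2} L]` and
`θ̄ = ∑_{j ≠ i} θⱼ`. -/
theorem lmi_implies_riccati
    (n m g s h N M : ℕ) (i : Fin N) (μ : Fin M)
    (A : Matrix (Fin n) (Fin n) ℝ) (B : Matrix (Fin n) (Fin m) ℝ)
    (E : Matrix (Fin n) (Fin g) ℝ) (L : Matrix (Fin n) (Fin s) ℝ)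
    (H : Matrix (Fin h) (Fin n) ℝ)
    (R : Matrix (Fin n) (Fin n) ℝ) (hR : R.PosDef) (hRsymm : R.IsSymm)
    (Gw : Matrix (Fin m) (Fin m) ℝ) (hGw : Gw.PosDef) (hGwsymm : Gw.IsSymm)
    (q : Fin M → ℝ) (hq : ∀ ν : Fin M, ν ≠ μ → 0 ≤ q ν)
    (Y : Fin M → Matrix (Fin n) (Fin n) ℝ) (hY : ∀ ν, (Y ν).PosDef)
    (hYsymm : ∀ ν, (Y ν).IsSymm)
    (X : Fin M → Matrix (Fin n) (Fin n) ℝ) (hX : ∀ ν, X ν = (Y ν)⁻¹)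
    (τut τt βb : ℝ) (θt : Fin N → ℝ)
    (hτut : 0 < τut) (hτt : 0 < τt) (hβb : 0 < βb) (hθt : ∀ j, 0 < θt j)
    -- the blocks of the LMI (12)
    (G11 : Matrix (Fin n) (Fin n) ℝ)
    (hG11 : G11 = Y μ * Aᵀ + A * Y μ + q μ • Y μ - B * Gw⁻¹ * Bᵀ
      + τut • (B * Bᵀ) + τt • (E * Eᵀ) + θt i • (L * Lᵀ))
    (G12 : Matrix (Fin n) ({ν : Fin M // ν ≠ μ} × Fin n) ℝ)
    (hG12 : G12 = Matrix.of fun a b => Real.sqrt (q b.1.1) * Y μ a b.2)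
    (G22 : Matrix ({ν : Fin M // ν ≠ μ} × Fin n) ({ν : Fin M // ν ≠ μ} × Fin n) ℝ)
    (hG22 : G22 = Matrix.of fun a b => if a.1 = b.1 then -Y a.1.1 a.2 b.2 else 0)
    (G13 : Matrix (Fin n) (Fin n ⊕ Fin n ⊕ Fin h ⊕ ({j : Fin N // j ≠ i} × Fin h)) ℝ)
    (hG13 : G13 = Matrix.of fun a b =>
      Sum.elim (fun k => Y μ a k)
        (Sum.elim (fun k => Y μ a k)
          (Sum.elim (fun k => (Y μ * Hᵀ) a k) (fun jk => (Y μ * Hᵀ) a jk.2))) b)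
    (G33 : Matrix (Fin n ⊕ Fin n ⊕ Fin h ⊕ ({j : Fin N // j ≠ i} × Fin h))
      (Fin n ⊕ Fin n ⊕ Fin h ⊕ ({j : Fin N // j ≠ i} × Fin h)) ℝ)
    (hG33 : G33 = Matrix.fromBlocks (-(R⁻¹)) 0 0
      (Matrix.fromBlocks (-(βb • (1 : Matrix (Fin n) (Fin n) ℝ))) 0 0
        (Matrix.fromBlocks (-(τt • (1 : Matrix (Fin h) (Fin h) ℝ))) 0 0
          (Matrix.of fun a b => if a = b then -θt a.1.1 else 0))))
    -- the LMI (12): the full block matrix is negative definite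
    (hLMI : (-(Matrix.fromBlocks G11
        (Matrix.of fun a b => Sum.elim (G12 a) (G13 a) b)
        (Matrix.of fun a b => Sum.elim (fun c => G12 b c) (fun c => G13 b c) a)
        (Matrix.fromBlocks G22 0 0 G33))).PosDef)
    -- the transformed scalars
    (τu τ βu : ℝ) (θ : Fin N → ℝ)
    (hτu : τu = τut⁻¹) (hτ : τ = τt⁻¹) (hθ : ∀ j, θ j = (θt j)⁻¹)
    (hβu : βu = βb⁻¹ * τut)
    (B2 : Matrix (Fin n) (Fin m ⊕ Fin g ⊕ Fin s) ℝ)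
    (hB2 : B2 = Matrix.of fun a b =>
      Sum.elim (fun k => Real.sqrt τu⁻¹ * B a k)
        (Sum.elim (fun k => Real.sqrt τ⁻¹ * E a k)
          (fun k => Real.sqrt (θ i)⁻¹ * L a k)) b)
    (θbar : ℝ) (hθbar : θbar = ∑ j ∈ Finset.univ.erase i, θ j) :
    -- the Riccati-type matrix inequality (10)
    (-(Aᵀ * X μ + X μ * A + ∑ ν : Fin M, q ν • X ν + R
        + X μ * (B2 * B2ᵀ - B * Gw⁻¹ * Bᵀ) * X μ
        + (τu * βu) • (1 : Matrix (Fin n) (Fin n) ℝ)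
        + (τ + θbar) • (Hᵀ * H))).PosDef :=
  lmi_implies_riccati_general n m g s h N M i μ A B E L H R hR Gw q hq Y hY hYsymm X hX τut τt βb θt
    hτut hτt hβb hθt G11 hG11 G12 hG12 G22 hG22 G13 hG13 G33 hG33 hLMI τu τ βu θ hτu hτ hθ hβu B2
    hB2 θbar hθbar
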